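/- Let β > 0, E : Ω → {0,…,B−1} an energy function, π the Gibbs distribution π_x = e^{-βE_x}/Z_β, f : ℝ → (0,1] with f(x) = e^{-βx} f(−x), a_{yx} = f(E_y − E_x), S = Σ_{k=1}^κ w_k Π_k a symmetric stochastic convex combination of permutation matrices, and P the propose-accept/reject transition matrix (p_{yx} = a_{yx} s_{yx} for y ≠ x, p_{xx} = 1 − Σ_{y≠x} a_{yx} s_{yx}). Let Q = D^{-1/2} P D^{1/2} with D = diag(π_x), let T_E : ℂ^Ω → ℂ^B ⊗ ℂ^Ω be the energy isometry T_E|x⟩ = |E_x⟩ ⊗ |x⟩, and define compressed B×B matrices Ĝ⊙A with entries e^{β(E'−E)/2} f(E'−E) and Ĵ−A with entries 1 − f(E'−E) (for E', E ∈ {0,…,B−1}). Then Q = T_E† ((Ĝ⊙A) ⊗ S) T_E + Σ_{k=1}^κ w_k Π_k^T T_E† ((Ĵ−A) ⊗ Π_k) T_E. -/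

import Mathlib

/-!
Compressing `M ↦ Tᵀ M T` by an isometry with `T x = e_{g x}` just reads `M` at the points `g x`, so
`T_Eᵀ ((Ĝ⊙A) ⊗ S) T_E` is the Hadamard product of `e^{β(E_y−E_x)/2} a_{yx}` with `S`. Since
`√(π_x / π_y) = e^{β(E_y−E_x)/2}`, this is `D^{-1/2} (A ⊙ S) D^{1/2}`, the off-diagonal part of `Q`.
Each `Π_kᵀ T_Eᵀ ((Ĵ−A) ⊗ Π_k) T_E` is diagonal with entries `1 − a_{σ_k x, x}`, and their
`w`-average is the rejection probability `1 − Σ_y a_{yx} s_{yx}`, which makes up the rest of the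
diagonal of `P` and is untouched by the diagonal conjugation.
-/

open Matrix BigOperators Kronecker

namespace Matrix

variable {ι Ω R : Type*}

theorem transpose_mul_mul_eq_submatrix [Fintype ι] [DecidableEq ι] [NonAssocSemiring R]
    (g : Ω → ι) {T : Matrix ι Ω R} (hT : ∀ i x, T i x = if i = g x then 1 else 0)
    (M : Matrix ι ι R) : Tᵀ * M * T = M.submatrix g g := by
  ext y x
  simp [mul_apply, hT]

theorem kronecker_submatrix_graph [Mul R] {ε : Type*} (E : Ω → ε) (A : Matrix ε ε R)
    (B : Matrix Ω Ω R) :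
    (A ⊗ₖ B).submatrix (fun x => (E x, x)) (fun x => (E x, x)) = A.submatrix E E ⊙ B :=
  rfl

theorem transpose_mul_hadamard_of_perm [Fintype Ω] [DecidableEq Ω] [NonAssocSemiring R]
    (σ : Equiv.Perm Ω) {P : Matrix Ω Ω R} (hP : ∀ v u, P v u = if v = σ u then 1 else 0)
    (A : Matrix Ω Ω R) : Pᵀ * (A ⊙ P) = diagonal fun x => A (σ x) x := by
  ext y x
  rcases eq_or_ne y x with rfl | hyx
  · simp [mul_apply, hP]
  · simp [mul_apply, hP, hyx, hyx.symm]

section PermSum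

variable [Fintype Ω] [DecidableEq Ω] [CommSemiring R] {κ : Type*} [Fintype κ] (w : κ → R)
  (σ : κ → Equiv.Perm Ω) {P : κ → Matrix Ω Ω R}

theorem sum_mul_apply_of_perm_sum (hP : ∀ k v u, P k v u = if v = σ k u then 1 else 0)
    (c : Ω → R) (x : Ω) :
    ∑ y, c y * (∑ k, w k • P k) y x = ∑ k, w k * c (σ k x) := by
  simp only [sum_apply, smul_apply, smul_eq_mul, hP, mul_ite, mul_one, mul_zero,
    Finset.mul_sum]
  rw [Finset.sum_comm]
  simp [mul_comm]

theorem sum_smul_transpose_mul_hadamard_of_perm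
    (hP : ∀ k v u, P k v u = if v = σ k u then 1 else 0) (A : Matrix Ω Ω R) :
    ∑ k, w k • ((P k)ᵀ * (A ⊙ P k)) = diagonal fun x => ∑ k, w k * A (σ k x) x := by
  simp only [transpose_mul_hadamard_of_perm (σ _) (hP _)]
  ext y x
  by_cases hyx : y = x <;> simp [Matrix.sum_apply, hyx]

end PermSum

theorem eq_hadamard_add_diagonal [Fintype Ω] [DecidableEq Ω] [Ring R] {A S P : Matrix Ω Ω R}
    (h_off : ∀ y x, y ≠ x → P y x = A y x * S y x)
    (h_diag : ∀ x, P x x = 1 - ∑ y ∈ Finset.univ \ {x}, A y x * S y x) :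
    P = A ⊙ S + diagonal fun x => 1 - ∑ y, A y x * S y x := by
  ext y x
  rcases eq_or_ne y x with rfl | hyx
  · simp only [h_diag, Finset.sdiff_singleton_eq_erase, Finset.mem_univ, Finset.sum_erase_eq_sub,
      add_apply, hadamard_apply, diagonal_apply_eq]
    abel
  · simp [h_off y x hyx, hyx]

theorem diagonal_mul_hadamard_mul_diagonal [Fintype Ω] [DecidableEq Ω] [CommSemiring R]
    (d₁ d₂ : Ω → R) (A S : Matrix Ω Ω R) :
    diagonal d₁ * (A ⊙ S) * diagonal d₂ = (of fun y x => d₁ y * A y x * d₂ x) ⊙ S := by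
  ext y x
  simp only [mul_diagonal, diagonal_mul, hadamard_apply, of_apply]
  ring

end Matrix

theorem Real.inv_sqrt_mul_sqrt_exp_div {Z : ℝ} (hZ : 0 < Z) (β u v : ℝ) :
    (√(Real.exp (-β * u) / Z))⁻¹ * √(Real.exp (-β * v) / Z) = Real.exp (β * (u - v) / 2) := by
  rw [Real.sqrt_div (Real.exp_nonneg _), Real.sqrt_div (Real.exp_nonneg _), ← Real.exp_half,
    ← Real.exp_half]
  have : √Z ≠ 0 := (Real.sqrt_pos.mpr hZ).ne'
  field_simp
  rw [← Real.exp_add]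
  congr 1
  ring

theorem stmt_10_general {Ω : Type*} [Fintype Ω] [DecidableEq Ω] (B : ℕ)
    (E : Ω → Fin B) (β : ℝ)
    (Z : ℝ) (hZ : Z = ∑ x, Real.exp (-β * (E x : ℝ)))
    (π : Ω → ℝ) (hπ : ∀ x, π x = Real.exp (-β * (E x : ℝ)) / Z)
    (f : ℝ → ℝ)
    (a : Ω → Ω → ℝ) (ha : ∀ y x, a y x = f ((E y : ℝ) - (E x : ℝ)))
    (κ : ℕ) (w : Fin κ → ℝ) (σ : Fin κ → Equiv.Perm Ω)
    (hw_sum : ∑ k, w k = 1)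
    (Pm : Fin κ → Matrix Ω Ω ℝ)
    (hPm : ∀ k v u, Pm k v u = if v = σ k u then 1 else 0)
    (S : Matrix Ω Ω ℝ) (hS : S = ∑ k, w k • Pm k)
    (P : Matrix Ω Ω ℝ)
    (hP_off : ∀ y x, y ≠ x → P y x = a y x * S y x)
    (hP_diag : ∀ x, P x x = 1 - ∑ y ∈ Finset.univ \ {x}, a y x * S y x)
    (Q : Matrix Ω Ω ℝ)
    (hQ : Q = Matrix.diagonal (fun x => (Real.sqrt (π x))⁻¹) * P *
      Matrix.diagonal (fun x => Real.sqrt (π x)))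
    (TE : Matrix (Fin B × Ω) Ω ℝ)
    (hTE : ∀ e u x, TE (e, u) x = if e = E x ∧ u = x then 1 else 0)
    (GA : Matrix (Fin B) (Fin B) ℝ)
    (hGA : ∀ e' e, GA e' e = Real.exp (β * ((e' : ℝ) - (e : ℝ)) / 2) * f ((e' : ℝ) - (e : ℝ)))
    (JA : Matrix (Fin B) (Fin B) ℝ)
    (hJA : ∀ e' e, JA e' e = 1 - f ((e' : ℝ) - (e : ℝ))) :
    Q = TEᵀ * (GA ⊗ₖ S) * TE +
      ∑ k, w k • ((Pm k)ᵀ * (TEᵀ * (JA ⊗ₖ Pm k) * TE)) := by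
  rcases isEmpty_or_nonempty Ω with hΩ | hΩ
  · exact Subsingleton.elim _ _
  have hZ_pos : 0 < Z := hZ ▸ Finset.sum_pos (fun x _ => Real.exp_pos _) Finset.univ_nonempty
  have hπ_pos : ∀ x, 0 < π x := fun x => hπ x ▸ div_pos (Real.exp_pos _) hZ_pos
  have hTE' : ∀ i x, TE i x = if i = (E x, x) then 1 else 0 := fun ⟨e, u⟩ x => by simp [hTE]
  have h_rejection : ∀ x, 1 - ∑ y, a y x * S y x = ∑ k, w k * JA (E (σ k x)) (E x) := by
    intro x
    simp only [hS, sum_mul_apply_of_perm_sum w σ hPm, ha, hJA, mul_sub, mul_one,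
      Finset.sum_sub_distrib, hw_sum]
  have h_accept : diagonal (fun x => (√(π x))⁻¹) * (of a ⊙ S) * diagonal (fun x => √(π x)) =
      GA.submatrix E E ⊙ S := by
    rw [diagonal_mul_hadamard_mul_diagonal]
    congr 1
    ext y x
    simp only [of_apply, submatrix_apply, hπ, ha, hGA, mul_comm _ (f _), mul_assoc,
      Real.inv_sqrt_mul_sqrt_exp_div hZ_pos]
  have h_stay : ∀ c : Ω → ℝ,
      diagonal (fun x => (√(π x))⁻¹) * diagonal c * diagonal (fun x => √(π x)) = diagonal c := by
    intro c
    simp only [diagonal_mul_diagonal]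
    congr 1
    ext x
    field_simp [(Real.sqrt_pos.mpr (hπ_pos x)).ne']
  simp only [hQ, eq_hadamard_add_diagonal (A := of a) hP_off hP_diag, mul_add, add_mul, h_accept,
    h_stay, transpose_mul_mul_eq_submatrix _ hTE', kronecker_submatrix_graph,
    sum_smul_transpose_mul_hadamard_of_perm w σ hPm, of_apply, submatrix_apply, h_rejection]

/-- Ancilla-efficient decomposition of the discriminant matrix of a
propose-accept/reject Markov chain with Gibbs stationary distribution:
`Q = T_E† ((Ĝ⊙A) ⊗ S) T_E + Σ_k w_k Π_kᵀ T_E† ((Ĵ−A) ⊗ Π_k) T_E`,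
where `T_E|x⟩ = |E_x⟩ ⊗ |x⟩` is the energy isometry, `Ĝ⊙A` has entries
`e^{β(E'−E)/2} f(E'−E)` and `Ĵ−A` has entries `1 − f(E'−E)`. -/
theorem stmt_10 {Ω : Type*} [Fintype Ω] [DecidableEq Ω] (B : ℕ)
    (E : Ω → Fin B) (β : ℝ) (hβ : 0 < β)
    (Z : ℝ) (hZ : Z = ∑ x, Real.exp (-β * (E x : ℝ)))
    (π : Ω → ℝ) (hπ : ∀ x, π x = Real.exp (-β * (E x : ℝ)) / Z)
    (f : ℝ → ℝ) (hf_mem : ∀ t, f t ∈ Set.Ioc (0:ℝ) 1)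
    (hf_eq : ∀ t, f t = Real.exp (-β * t) * f (-t))
    (a : Ω → Ω → ℝ) (ha : ∀ y x, a y x = f ((E y : ℝ) - (E x : ℝ)))
    (κ : ℕ) (w : Fin κ → ℝ) (σ : Fin κ → Equiv.Perm Ω)
    (hw_nonneg : ∀ k, 0 ≤ w k) (hw_sum : ∑ k, w k = 1)
    (Pm : Fin κ → Matrix Ω Ω ℝ)
    (hPm : ∀ k v u, Pm k v u = if v = σ k u then 1 else 0)
    (S : Matrix Ω Ω ℝ) (hS : S = ∑ k, w k • Pm k)
    (P : Matrix Ω Ω ℝ)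
    (hP_off : ∀ y x, y ≠ x → P y x = a y x * S y x)
    (hP_diag : ∀ x, P x x = 1 - ∑ y ∈ Finset.univ \ {x}, a y x * S y x)
    (Q : Matrix Ω Ω ℝ)
    (hQ : Q = Matrix.diagonal (fun x => (Real.sqrt (π x))⁻¹) * P *
      Matrix.diagonal (fun x => Real.sqrt (π x)))
    (TE : Matrix (Fin B × Ω) Ω ℝ)
    (hTE : ∀ e u x, TE (e, u) x = if e = E x ∧ u = x then 1 else 0)
    (GA : Matrix (Fin B) (Fin B) ℝ)
    (hGA : ∀ e' e, GA e' e = Real.exp (β * ((e' : ℝ) - (e : ℝ)) / 2) * f ((e' : ℝ) - (e : ℝ)))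
    (JA : Matrix (Fin B) (Fin B) ℝ)
    (hJA : ∀ e' e, JA e' e = 1 - f ((e' : ℝ) - (e : ℝ))) :
    Q = TEᵀ * (GA ⊗ₖ S) * TE +
      ∑ k, w k • ((Pm k)ᵀ * (TEᵀ * (JA ⊗ₖ Pm k) * TE)) :=
  stmt_10_general B E β Z hZ π hπ f a ha κ w σ hw_sum Pm hPm S hS P hP_off hP_diag Q hQ TE hTE GA
    hGA JA hJA
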